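/- arXiv:2407.17411 — 2 statements merged into one kernel-verified Lean document; each statement's English description precedes it below -/
import Mathlib

section
/- Let p be a prime number, let n ≥ 1 and k ≥ 2 be integers, and let (x_m)_{m ≥ k−1} be a family of elements of ℚ_p such that for every integer m ≥ k−1 one has ‖x_m‖_p ≤ p^{⌊log m / log p⌋} · p^{−n(m − (k−2)/2)} (where ⌊log m / log p⌋ = Nat.log p m and the second exponent is a rational number, interpreted via real powers of p). Then the family (x_m)_{m ≥ k−1} is summable in ℚ_p and its sum S satisfies ‖S‖_p ≤ p^{−(nk/2 − ⌊log(k−1)/log p⌋)}. -/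
/-
Since `Nat.log p m ≤ Nat.log p (k - 1) + (m - (k - 1))` and `n ≥ 1`, every term is bounded by
`p ^ (-(n k / 2 - Nat.log p (k - 1)))`, so the ultrametric inequality bounds the sum. Summability
holds already in `ℝ` for the bounds themselves: as `p ^ Nat.log p m ≤ m`, they are dominated by
a multiple of `m (p ^ (-n)) ^ m`.
-/

theorem Nat.log_succ_le_log_add_one (p b : ℕ) : Nat.log p (b + 1) ≤ Nat.log p b + 1 := by
  rcases Nat.lt_or_ge 1 p with hp | hp
  · rcases Nat.eq_zero_or_pos b with rfl | hb
    · simp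
    calc Nat.log p (b + 1) ≤ Nat.log p (b * p) := Nat.log_mono_right (by nlinarith)
      _ = Nat.log p b + 1 := Nat.log_mul_base hp hb.ne'
  · simp [Nat.log_of_left_le_one hp]

theorem Nat.log_le_log_add_sub (p : ℕ) {a b : ℕ} (hab : a ≤ b) :
    Nat.log p b ≤ Nat.log p a + (b - a) := by
  induction b, hab using Nat.le_induction with
  | base => simp
  | succ b hab ih => have := Nat.log_succ_le_log_add_one p b; omega

section PowBounds

variable {p : ℕ}

theorem rpow_log_mul_rpow_le_mul_geometric (hp : 0 < p) (n : ℕ) (c : ℝ) {m : ℕ}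
    (hm : m ≠ 0) :
    (p : ℝ) ^ (Nat.log p m : ℝ) * (p : ℝ) ^ (-((n : ℝ) * ((m : ℝ) - c))) ≤
      (p : ℝ) ^ ((n : ℝ) * c) * ((m : ℝ) * ((p : ℝ) ^ (-(n : ℝ))) ^ m) := by
  have hlog : (p : ℝ) ^ (Nat.log p m : ℝ) ≤ m := by
    rw [Real.rpow_natCast]
    exact_mod_cast Nat.pow_log_le_self p hm
  have hsplit : (p : ℝ) ^ (-((n : ℝ) * ((m : ℝ) - c))) =
      (p : ℝ) ^ ((n : ℝ) * c) * ((p : ℝ) ^ (-(n : ℝ))) ^ m := by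
    rw [← Real.rpow_natCast, ← Real.rpow_mul (by positivity),
      ← Real.rpow_add (by positivity)]
    ring_nf
  rw [hsplit]
  calc _ ≤ (m : ℝ) * ((p : ℝ) ^ ((n : ℝ) * c) * ((p : ℝ) ^ (-(n : ℝ))) ^ m) :=
        mul_le_mul_of_nonneg_right hlog (by positivity)
    _ = _ := by ring

theorem summable_rpow_log_mul_rpow (hp : 1 < p) {n : ℕ} (hn : 1 ≤ n) (c : ℝ) :
    Summable fun m : ℕ =>
      (p : ℝ) ^ (Nat.log p m : ℝ) * (p : ℝ) ^ (-((n : ℝ) * ((m : ℝ) - c))) := by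
  have hp' : (1 : ℝ) < p := by exact_mod_cast hp
  have hr : ‖(p : ℝ) ^ (-(n : ℝ))‖ < 1 := by
    rw [Real.norm_of_nonneg (by positivity)]
    exact Real.rpow_lt_one_of_one_lt_of_neg hp' (neg_lt_zero.mpr (Nat.cast_pos.mpr hn))
  have hgeom : Summable fun m : ℕ =>
      (p : ℝ) ^ ((n : ℝ) * c) * ((m : ℝ) * ((p : ℝ) ^ (-(n : ℝ))) ^ m) := by
    simpa only [pow_one] using (summable_pow_mul_geometric_of_norm_lt_one 1 hr).mul_left _
  rw [← summable_nat_add_iff 1] at hgeom ⊢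
  exact hgeom.of_nonneg_of_le (fun _ => by positivity)
    fun m => rpow_log_mul_rpow_le_mul_geometric (by omega) n c m.succ_ne_zero

theorem rpow_log_mul_rpow_le (hp : 1 < p) {n k m : ℕ} (hn : 1 ≤ n) (hk : 1 ≤ k)
    (hm : k - 1 ≤ m) :
    (p : ℝ) ^ (Nat.log p m : ℝ) *
        (p : ℝ) ^ (-((n : ℝ) * ((m : ℝ) - ((k : ℝ) - 2) / 2))) ≤
      (p : ℝ) ^ (-((n : ℝ) * (k : ℝ) / 2 - (Nat.log p (k - 1) : ℝ))) := by
  have hp' : (1 : ℝ) < p := by exact_mod_cast hp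
  rw [← Real.rpow_add (by positivity)]
  apply Real.rpow_le_rpow_of_exponent_le hp'.le
  have hk' : ((k - 1 : ℕ) : ℝ) = k - 1 := by rw [Nat.cast_sub hk, Nat.cast_one]
  have hlog : (Nat.log p m : ℝ) ≤ Nat.log p (k - 1) + ((m : ℝ) - ((k : ℝ) - 1)) := by
    rw [← hk', ← Nat.cast_sub hm]
    exact_mod_cast Nat.log_le_log_add_sub p hm
  have hn' : (1 : ℝ) ≤ n := by exact_mod_cast hn
  have hm' : (k : ℝ) - 1 ≤ m := by
    rw [← hk']
    exact_mod_cast hm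
  -- the exponent gap is `(log p (k-1) + (m-(k-1)) - log p m) + (n-1)(m-(k-1))`
  nlinarith [mul_nonneg (sub_nonneg.mpr hn') (sub_nonneg.mpr hm')]

end PowBounds

/-- If `p` is prime, `n ≥ 1`, `k ≥ 2`, and `(x_m)_{m ≥ k−1}` is a family in `ℚ_p`
with `‖x m‖ ≤ p^(Nat.log p m) · p^(−n(m − (k−2)/2))` for all `m ≥ k−1`, then the
family is summable and its sum has norm at most `p^(−(nk/2 − Nat.log p (k−1)))`. -/
theorem stmt1 (p : ℕ) [Fact p.Prime] (n k : ℕ) (hn : 1 ≤ n) (hk : 2 ≤ k)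
    (x : ℕ → ℚ_[p])
    (hx : ∀ m : ℕ, k - 1 ≤ m →
      ‖x m‖ ≤ (p : ℝ) ^ (Nat.log p m : ℝ) *
        (p : ℝ) ^ (-((n : ℝ) * ((m : ℝ) - ((k : ℝ) - 2) / 2)))) :
    Summable (fun m : {m : ℕ // k - 1 ≤ m} => x m) ∧
    ‖∑' m : {m : ℕ // k - 1 ≤ m}, x (m : ℕ)‖ ≤
      (p : ℝ) ^ (-((n : ℝ) * (k : ℝ) / 2 - (Nat.log p (k - 1) : ℝ))) := by
  have hp := (Fact.out : p.Prime).one_lt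
  refine ⟨?_, ?_⟩
  · exact ((summable_rpow_log_mul_rpow hp hn _).subtype _).of_norm_bounded fun m => hx m m.2
  · exact IsUltrametricDist.norm_tsum_le_of_forall_le_of_nonneg (by positivity)
      fun m => (hx m m.2).trans (rpow_log_mul_rpow_le hp hn (by omega) m.2)
end

section
/- Let p be a prime number, let a be a unit of the ring ℤ_p of p-adic integers, let c ∈ ℤ_p, and let n ≥ 0 be an integer. In the formal power series ring ℚ_p⟦T⟧, set F(T) = (T + a)^n · ( c + Σ_{j ≥ 1} ((−1)^{j−1} / j) · a^{−j} · T^j ). Then for every integer m ≥ 0, the m-th coefficient c_m of F satisfies ‖c_m‖_p ≤ p^{⌊log m / log p⌋}, equivalently v_p(c_m) ≥ −⌊log m / log p⌋ (with the convention ⌊log 0 / log p⌋ = 0, i.e. ⌊log m / log p⌋ = Nat.log p m). -/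
/-!
The coefficients of `(T + a)^n` lie in `ℤ_p`, and the `j`-th coefficient of the logarithm factor
is a `p`-adic integer divided by `j`, hence has norm at most `‖1/j‖_p ≤ p^(Nat.log p j)`.
By the ultrametric inequality, the `m`-th coefficient of the product is bounded by the largest
of these bounds for `j ≤ m`.
-/

open PowerSeries

theorem PowerSeries.norm_coeff_mul_le_of_norm_coeff_le_one {R : Type*} [NormedRing R]
    [IsUltrametricDist R] {f g : PowerSeries R} {m : ℕ} {C : ℝ} (hC : 0 ≤ C)
    (hf : ∀ i, ‖coeff i f‖ ≤ 1) (hg : ∀ j ≤ m, ‖coeff j g‖ ≤ C) :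
    ‖coeff m (f * g)‖ ≤ C := by
  rw [coeff_mul]
  refine IsUltrametricDist.norm_sum_le_of_forall_le_of_nonneg hC fun ⟨i, j⟩ hij => ?_
  have hjm : j ≤ m := (Finset.HasAntidiagonal.mem_antidiagonal.mp hij) ▸ Nat.le_add_left j i
  calc ‖coeff i f * coeff j g‖ ≤ ‖coeff i f‖ * ‖coeff j g‖ := norm_mul_le _ _
    _ ≤ 1 * C := mul_le_mul (hf i) (hg j hjm) (norm_nonneg _) zero_le_one
    _ = C := one_mul C

namespace Padic

variable {p : ℕ} [Fact p.Prime]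

theorem norm_natCast_inv_le_pow_log (j : ℕ) : ‖(j : ℚ_[p])⁻¹‖ ≤ (p : ℝ) ^ Nat.log p j := by
  rcases eq_or_ne j 0 with rfl | hj
  · simp
  have hp : (1 : ℝ) ≤ p := mod_cast (Fact.out : p.Prime).one_lt.le
  rw [norm_inv, norm_eq_zpow_neg_valuation (Nat.cast_ne_zero.mpr hj), valuation_natCast,
    ← zpow_neg, neg_neg, zpow_natCast]
  exact pow_le_pow_right₀ hp (padicValNat_le_nat_log j)

theorem norm_coeff_map_padicInt_le_one (f : PowerSeries ℤ_[p]) (i : ℕ) :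
    ‖coeff i (f.map PadicInt.Coe.ringHom)‖ ≤ 1 := by
  rw [coeff_map]
  exact PadicInt.norm_le_one (coeff i f)

/-- `c + log (1 + b T)`. -/
noncomputable def logSeries (c b : ℚ_[p]) : PowerSeries ℚ_[p] :=
  PowerSeries.mk fun j => if j = 0 then c else ((-1 : ℚ_[p]) ^ (j - 1) / (j : ℚ_[p])) * b ^ j

theorem norm_coeff_logSeries_le {c b : ℚ_[p]} (hc : ‖c‖ ≤ 1) (hb : ‖b‖ ≤ 1) (j : ℕ) :
    ‖coeff j (logSeries c b)‖ ≤ (p : ℝ) ^ Nat.log p j := by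
  rw [logSeries, coeff_mk]
  split_ifs with hj
  · simpa [hj] using hc
  calc ‖(-1 : ℚ_[p]) ^ (j - 1) / (j : ℚ_[p]) * b ^ j‖ = ‖(j : ℚ_[p])⁻¹‖ * ‖b‖ ^ j := by
        rw [norm_mul, norm_div, norm_pow, norm_pow, norm_neg, norm_one, one_pow, norm_inv,
          one_div]
    _ ≤ (p : ℝ) ^ Nat.log p j * 1 :=
        mul_le_mul (norm_natCast_inv_le_pow_log j) (pow_le_one₀ (norm_nonneg b) hb)
          (by positivity) (by positivity)
    _ = (p : ℝ) ^ Nat.log p j := mul_one _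

end Padic

/-- Coefficient bound for the power series
`F(T) = (T + a)^n · (c + Σ_{j ≥ 1} ((−1)^(j−1)/j) a^(−j) T^j)` over `ℚ_p`,
where `a ∈ ℤ_p` is a unit and `c ∈ ℤ_p`:  the `m`-th coefficient has norm at most
`p^(Nat.log p m)`. -/
theorem stmt2 (p : ℕ) [Fact p.Prime] (a : ℤ_[p]ˣ) (c : ℤ_[p]) (n : ℕ)
    (F : PowerSeries ℚ_[p])
    (hF : F = (PowerSeries.X + PowerSeries.C (((a : ℤ_[p]) : ℚ_[p]))) ^ n *
      PowerSeries.mk (fun j => if j = 0 then ((c : ℚ_[p]))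
        else ((-1 : ℚ_[p]) ^ (j - 1) / (j : ℚ_[p])) * ((((a : ℤ_[p]) : ℚ_[p]))⁻¹) ^ j)) :
    ∀ m : ℕ, ‖PowerSeries.coeff m F‖ ≤ (p : ℝ) ^ (Nat.log p m) := by
  intro m
  have hp : (1 : ℝ) ≤ p := mod_cast (Fact.out : p.Prime).one_lt.le
  have hpow : (X + C ((a : ℤ_[p]) : ℚ_[p])) ^ n =
      ((X + C (a : ℤ_[p])) ^ n).map PadicInt.Coe.ringHom := by
    rw [map_pow, map_add, map_X, map_C]
    rfl
  have hc : ‖(c : ℚ_[p])‖ ≤ 1 := by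
    rw [PadicInt.padic_norm_e_of_padicInt]; exact PadicInt.norm_le_one c
  have ha : ‖((a : ℤ_[p]) : ℚ_[p])⁻¹‖ ≤ 1 := by
    rw [norm_inv, PadicInt.padic_norm_e_of_padicInt, PadicInt.norm_units, inv_one]
  change F = _ * Padic.logSeries _ _ at hF
  rw [hF, hpow]
  refine norm_coeff_mul_le_of_norm_coeff_le_one (by positivity)
    (Padic.norm_coeff_map_padicInt_le_one _) fun j hj => ?_
  exact (Padic.norm_coeff_logSeries_le hc ha j).trans
    (pow_le_pow_right₀ hp (Nat.log_mono_right hj))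
end
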